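/- arXiv:1602.07060 — 4 statements merged into one kernel-verified Lean document; each statement's English description precedes it below -/
import Mathlib

section
/- The product on R × M defined by (a, x) · (b, y) = (a b + ω(x, y), a • y + b • x) is associative with unit (1, 0), so R × M becomes a unital (not necessarily commutative) ring whose subset R × {0} is a subring isomorphic to R. -/
/-- The multiplication `(a, x) · (b, y) = (a b + ω(x, y), a • y + b • x)` on `R × M`. -/
def superMul {R M : Type*} [CommRing R] [AddCommGroup M] [Module R M]
    (ω : M →ₗ[R] M →ₗ[R] R) (p q : R × M) : R × M :=
  (p.1 * q.1 + ω p.2 q.2, p.1 • q.2 + q.1 • p.2)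

section aux
variable {R M : Type*} [CommRing R] [AddCommGroup M] [Module R M]
    (ω : M →ₗ[R] M →ₗ[R] R)

lemma superMul_assoc (hassoc : ∀ x y z : M, ω x y • z = ω y z • x)
    (p q r : R × M) : superMul ω (superMul ω p q) r = superMul ω p (superMul ω q r) := by
  obtain ⟨a, x⟩ := p; obtain ⟨b, y⟩ := q; obtain ⟨c, z⟩ := r
  simp only [superMul, Prod.mk.injEq, map_add, map_smul, LinearMap.add_apply,
    LinearMap.smul_apply, smul_eq_mul, smul_add, smul_smul]
  constructor
  · ring
  · rw [add_smul, add_smul, hassoc x y z, mul_comm c a, mul_comm c b]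
    abel

lemma superMul_one (p : R × M) :
    superMul ω (1, 0) p = p ∧ superMul ω p (1, 0) = p := by
  constructor <;> simp [superMul]

lemma superMul_left_distrib (p q r : R × M) :
    superMul ω p (q + r) = superMul ω p q + superMul ω p r := by
  simp only [superMul, Prod.fst_add, Prod.snd_add, map_add, LinearMap.add_apply, Prod.mk_add_mk,
    Prod.mk.injEq]
  constructor
  · ring
  · simp [smul_add, add_smul]; abel

lemma superMul_right_distrib (p q r : R × M) :
    superMul ω (p + q) r = superMul ω p r + superMul ω q r := by
  simp only [superMul, Prod.fst_add, Prod.snd_add, map_add, LinearMap.add_apply, Prod.mk_add_mk,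
    Prod.mk.injEq]
  constructor
  · ring
  · simp [smul_add, add_smul]; abel

/-- The ring structure on `R × M`. -/
def superRing (hassoc : ∀ x y z : M, ω x y • z = ω y z • x) : Ring (R × M) :=
  { (inferInstance : AddCommGroup (R × M)) with
    mul := superMul ω
    one := (1, 0)
    mul_assoc := superMul_assoc ω hassoc
    one_mul := fun p => (superMul_one ω p).1
    mul_one := fun p => (superMul_one ω p).2
    left_distrib := superMul_left_distrib ω
    right_distrib := superMul_right_distrib ω
    zero_mul := fun p => by show superMul ω 0 p = 0; simp [superMul, Prod.ext_iff]
    mul_zero := fun p => by show superMul ω p 0 = 0; simp [superMul, Prod.ext_iff] }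

end aux

theorem stmt0 {R M : Type*} [CommRing R] [AddCommGroup M] [Module R M]
    (ω : M →ₗ[R] M →ₗ[R] R)
    (hassoc : ∀ x y z : M, ω x y • z = ω y z • x) :
    (∀ p q r : R × M, superMul ω (superMul ω p q) r = superMul ω p (superMul ω q r)) ∧
    (∀ p : R × M, superMul ω (1, 0) p = p ∧ superMul ω p (1, 0) = p) ∧
    ∃ inst : Ring (R × M),
      letI := inst
      (∀ p q : R × M, p * q = superMul ω p q) ∧ ((1 : R × M) = (1, 0)) ∧
        (∀ p q : R × M, p + q = (p.1 + q.1, p.2 + q.2)) ∧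
        ∃ f : R →+* R × M,
          (∀ a : R, f a = (a, 0)) ∧ Function.Injective f ∧
            Set.range f = {p : R × M | p.2 = 0} := by
  letI inst := superRing ω hassoc
  refine ⟨superMul_assoc ω hassoc, superMul_one ω, inst, fun p q => rfl, rfl,
    fun p q => rfl, ?_⟩
  refine ⟨{ toFun := fun a => (a, 0)
            map_one' := rfl
            map_mul' := fun a b => by
              show (a * b, 0) = superMul ω (a, 0) (b, 0)
              simp [superMul]
            map_zero' := rfl
            map_add' := fun a b => Prod.ext rfl (add_zero (0:M)).symm }, fun a => rfl, ?_, ?_⟩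
  · intro a b h
    exact congrArg Prod.fst h
  · ext p
    constructor
    · rintro ⟨a, rfl⟩; rfl
    · intro h
      exact ⟨p.1, Prod.ext rfl h.symm⟩
end

section
/- If M is a finitely generated R-module, then the ideal of R generated by the image of ω (i.e. by all elements ω(x, y), x, y ∈ M) is a nilpotent ideal. -/
theorem stmt2 {R M : Type*} [CommRing R] [Invertible (2 : R)]
    [AddCommGroup M] [Module R M] [Module.Finite R M]
    (ω : M →ₗ[R] M →ₗ[R] R)
    (hskew : ∀ x y : M, ω x y = - ω y x)
    (hassoc : ∀ x y z : M, ω x y • z = ω y z • x) :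
    IsNilpotent (Ideal.span {r : R | ∃ x y : M, ω x y = r}) := by
  -- key multiplicative identity
  have hA : ∀ x y z w : M, ω x y * ω z w = ω y z * ω x w := by
    intro x y z w
    have := congrArg (fun m => ω m w) (hassoc x y z)
    simpa [smul_eq_mul] using this
  have hB : ∀ v y w : M, ω v y * ω v w = 0 := by
    intro v y w
    have h1 : ω v y * ω v w = ω y v * ω v w := hA v y v w
    rw [hskew y v] at h1
    have h2 : (2 : R) * (ω v y * ω v w) = 0 := by ring_nf; linear_combination h1
    have := congrArg (fun r => ⅟(2:R) * r) h2
    simpa [← mul_assoc] using this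
  obtain ⟨S, hS⟩ := Module.Finite.fg_top (R := R) (M := M)
  set Jv : M → Ideal R := fun v => Ideal.span ((fun w => ω v w) '' ↑S) with hJv
  set J : Ideal R := ∑ v ∈ S, Jv v with hJdef
  have hJvnil : ∀ v : M, IsNilpotent (Jv v) := by
    intro v
    refine ⟨2, ?_⟩
    rw [pow_two, hJv]
    rw [Ideal.span_mul_span']
    refine le_bot_iff.mp (Ideal.span_le.mpr ?_)
    rintro r ⟨a, ⟨w, _, rfl⟩, b, ⟨w', _, rfl⟩, rfl⟩
    simpa using hB v w w'
  have hJnil : IsNilpotent J := isNilpotent_sum (fun v _ => hJvnil v)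
  -- the span is contained in J
  have hmem : ∀ x y : M, ω x y ∈ J := by
    have hv : ∀ v ∈ S, ∀ y : M, ω v y ∈ Jv v := by
      intro v hvS y
      have hy : y ∈ Submodule.span R (↑S : Set M) := hS ▸ Submodule.mem_top
      refine Submodule.span_induction ?_ ?_ ?_ ?_ hy
      · intro w hw
        exact Ideal.subset_span ⟨w, hw, rfl⟩
      · simp
      · intro a b _ _ ha hb
        simpa using (Jv v).add_mem ha hb
      · intro c a _ ha
        simpa using (Jv v).smul_mem c ha
    intro x y
    have hx : x ∈ Submodule.span R (↑S : Set M) := hS ▸ Submodule.mem_top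
    refine Submodule.span_induction ?_ ?_ ?_ ?_ hx
    · intro v hvS
      have h1 : Jv v ≤ J := by
        rw [hJdef]
        exact Finset.single_le_sum (f := Jv) (fun i _ => bot_le) hvS
      exact h1 (hv v hvS y)
    · simp
    · intro a b _ _ ha hb
      simpa using J.add_mem ha hb
    · intro c a _ ha
      simpa using J.smul_mem c ha
  have hle : Ideal.span {r : R | ∃ x y : M, ω x y = r} ≤ J := by
    refine Ideal.span_le.mpr ?_
    rintro r ⟨x, y, rfl⟩
    exact hmem x y
  obtain ⟨n, hn⟩ := hJnil
  exact ⟨n, le_bot_iff.mp (le_trans (Ideal.pow_right_mono hle n) hn.le)⟩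
end

section
/- Let I ⊆ R be the ideal generated by the image of ω. Then J = { (r, x) : r ∈ I, x ∈ M } is a two-sided ideal of the ring R ×_ω M, and the quotient ring (R ×_ω M)/J is isomorphic to R/I. -/
theorem stmt6 {R M : Type*} [CommRing R] [AddCommGroup M] [Module R M]
    (ω : M →ₗ[R] M →ₗ[R] R)
    (hassoc : ∀ x y z : M, ω x y • z = ω y z • x) :
    let I : Ideal R := Ideal.span (Set.range fun xy : M × M => ω xy.1 xy.2)
    let J : Set (R × M) := {p : R × M | p.1 ∈ I}
    ((0 : R × M) ∈ J) ∧
    (∀ p q : R × M, p ∈ J → q ∈ J → p + q ∈ J) ∧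
    (∀ p : R × M, p ∈ J → -p ∈ J) ∧
    (∀ p ∈ J, ∀ q : R × M, superMul ω q p ∈ J ∧ superMul ω p q ∈ J) ∧
    (∃ π : R × M → R ⧸ I,
      Function.Surjective π ∧
      π (1, 0) = 1 ∧
      (∀ p q : R × M, π (p + q) = π p + π q) ∧
      (∀ p q : R × M, π (superMul ω p q) = π p * π q) ∧
      (∀ p : R × M, π p = 0 ↔ p ∈ J)) := by
  intro I J
  have hω : ∀ x y : M, ω x y ∈ I := fun x y =>
    Ideal.subset_span ⟨(x, y), rfl⟩
  refine ⟨I.zero_mem, fun p q hp hq => I.add_mem hp hq,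
    fun p hp => I.neg_mem hp, ?_, ?_⟩
  · intro p hp q
    constructor
    · exact I.add_mem (I.mul_mem_left q.1 hp) (hω _ _)
    · exact I.add_mem (I.mul_mem_right q.1 hp) (hω _ _)
  · refine ⟨fun p => Ideal.Quotient.mk I p.1, ?_, ?_, ?_, ?_, ?_⟩
    · intro r
      obtain ⟨a, rfl⟩ := Ideal.Quotient.mk_surjective r
      exact ⟨(a, 0), rfl⟩
    · simp
    · intro p q; simp
    · intro p q
      simp only [superMul, map_add, map_mul]
      rw [Ideal.Quotient.eq_zero_iff_mem.2 (hω p.2 q.2), add_zero]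
    · intro p
      exact Ideal.Quotient.eq_zero_iff_mem
end

section
/- If C is a reduced commutative ring and ω is alternating (ω(x, x) = 0 for all x), then every ring homomorphism F : R ×_ω M → C vanishes on {0} × M, and hence factors uniquely through the quotient map R ×_ω M → R/I, where I is the ideal of R generated by the image of ω. -/
section superMul

variable {R M : Type*} [CommRing R] [AddCommGroup M] [Module R M] (ω : M →ₗ[R] M →ₗ[R] R)

theorem superMul_mk_zero_mk_zero (a b : R) : superMul ω (a, 0) (b, 0) = (a * b, 0) := by
  simp [superMul]

theorem superMul_zero_mk_zero_mk (x y : M) : superMul ω (0, x) (0, y) = (ω x y, 0) := by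
  simp [superMul]

variable {C : Type*} [CommRing C] {F : R × M → C}
  (hFadd : ∀ p q : R × M, F (p + q) = F p + F q)
  (hFmul : ∀ p q : R × M, F (superMul ω p q) = F p * F q)
include hFadd hFmul

theorem apply_zero_mk_eq_zero [IsReduced C] (halt : ∀ x : M, ω x x = 0) (x : M) :
    F (0, x) = 0 := by
  have hsq : F (0, x) * F (0, x) = 0 := by
    rw [← hFmul, superMul_zero_mk_zero_mk, halt, ← Prod.zero_eq_mk]
    exact map_zero (AddMonoidHom.mk' F hFadd)
  exact IsNilpotent.eq_zero ⟨2, by rwa [pow_two]⟩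

def restrictFstRingHom (hF1 : F (1, 0) = 1) : R →+* C where
  toFun a := F (a, 0)
  map_one' := hF1
  map_mul' a b := by rw [← hFmul, superMul_mk_zero_mk_zero]
  map_zero' := map_zero (AddMonoidHom.mk' F hFadd)
  map_add' a b := by rw [← hFadd, Prod.mk_add_mk, add_zero]

variable (hF1 : F (1, 0) = 1) (hF0 : ∀ x : M, F (0, x) = 0)
include hF0

theorem apply_eq_restrictFstRingHom_fst (p : R × M) :
    F p = restrictFstRingHom ω hFadd hFmul hF1 p.1 := by
  obtain ⟨a, x⟩ := p
  calc F (a, x) = F (a, 0) + F (0, x) := by rw [← hFadd, Prod.mk_add_mk, add_zero, zero_add]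
    _ = F (a, 0) := by rw [hF0, add_zero]

theorem span_range_le_ker_restrictFstRingHom :
    Ideal.span (Set.range fun xy : M × M => ω xy.1 xy.2) ≤
      RingHom.ker (restrictFstRingHom ω hFadd hFmul hF1) := by
  rw [Ideal.span_le]
  rintro _ ⟨⟨x, y⟩, rfl⟩
  change F (ω x y, 0) = 0
  rw [← superMul_zero_mk_zero_mk, hFmul, hF0, zero_mul]

end superMul

theorem stmt7_general {R M C : Type*} [CommRing R] [AddCommGroup M] [Module R M]
    [CommRing C] [IsReduced C]
    (ω : M →ₗ[R] M →ₗ[R] R)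
    (halt : ∀ x : M, ω x x = 0)
    (F : R × M → C)
    (hF1 : F (1, 0) = 1)
    (hFadd : ∀ p q : R × M, F (p + q) = F p + F q)
    (hFmul : ∀ p q : R × M, F (superMul ω p q) = F p * F q) :
    let I : Ideal R := Ideal.span (Set.range fun xy : M × M => ω xy.1 xy.2)
    (∀ x : M, F (0, x) = 0) ∧
    (∃! g : R ⧸ I →+* C, ∀ p : R × M, g (Ideal.Quotient.mk I p.1) = F p) := by
  intro I
  have hF0 := apply_zero_mk_eq_zero ω hFadd hFmul halt
  set f := restrictFstRingHom ω hFadd hFmul hF1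
  have hFf := apply_eq_restrictFstRingHom_fst ω hFadd hFmul hF1 hF0
  have hI : ∀ a ∈ I, f a = 0 := fun a ha =>
    span_range_le_ker_restrictFstRingHom ω hFadd hFmul hF1 hF0 ha
  refine ⟨hF0, Ideal.Quotient.lift I f hI, fun p => by rw [Ideal.Quotient.lift_mk, hFf], ?_⟩
  intro g hg
  refine Ideal.Quotient.ringHom_ext (RingHom.ext fun a => ?_)
  simpa [hFf] using hg (a, 0)

theorem stmt7 {R M C : Type*} [CommRing R] [AddCommGroup M] [Module R M]
    [CommRing C] [IsReduced C]
    (ω : M →ₗ[R] M →ₗ[R] R)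
    (halt : ∀ x : M, ω x x = 0)
    (hassoc : ∀ x y z : M, ω x y • z = ω y z • x)
    (F : R × M → C)
    (hF1 : F (1, 0) = 1)
    (hFadd : ∀ p q : R × M, F (p + q) = F p + F q)
    (hFmul : ∀ p q : R × M, F (superMul ω p q) = F p * F q) :
    let I : Ideal R := Ideal.span (Set.range fun xy : M × M => ω xy.1 xy.2)
    (∀ x : M, F (0, x) = 0) ∧
    (∃! g : R ⧸ I →+* C, ∀ p : R × M, g (Ideal.Quotient.mk I p.1) = F p) :=
  stmt7_general ω halt F hF1 hFadd hFmul
end
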